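/- (Inverse property) Let 0 < a, 0 < α < 1 and β > 0, and let f be a continuous function on [a,∞) such that its M-integral exists on [a, t]. Then for every t > a, the local M-derivative of the function F(t) = _M I_a^{α,β} f(t) exists and 𝒟_M^{α,β}(_M I_a^{α,β} f)(t) = f(t). -/

import Mathlib

/-!
For `y ≥ 1` the Gamma integral dominates `∫_1^∞ e^{-x} dx = e⁻¹`, so the Mittag-Leffler series is
dominated by `e · ∑ |x|^k`; hence `E_β(x) = 1 + x / Γ(β+1) + O(x²)` and `E_β'(0) = Γ(β+1)⁻¹`.
By the chain rule, a function `F` differentiable at `t > 0` then has local M-derivative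
`t^{1-α} F'(t) / Γ(β+1)`. For the M-integral, the fundamental theorem of calculus gives
`F'(t) = Γ(β+1) f(t) / t^{1-α}`, and the factors cancel.
-/

open Filter Topology

/-- One-parameter Mittag-Leffler function `E_β(x) = ∑_{k=0}^∞ x^k / Γ(βk+1)`. -/
noncomputable def mittagLeffler (β x : ℝ) : ℝ :=
  ∑' k : ℕ, x ^ k / Real.Gamma (β * k + 1)

/-- `f` has local M-derivative `L` of order `α` with parameter `β` at `t`, i.e.
`lim_{ε→0} (f (t · E_β (ε t^{-α})) - f t)/ε = L`. -/
def HasLocalMDerivAt (α β : ℝ) (f : ℝ → ℝ) (t L : ℝ) : Prop :=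
  Tendsto (fun ε : ℝ => (f (t * mittagLeffler β (ε * t ^ (-α))) - f t) / ε)
    (𝓝[≠] (0 : ℝ)) (𝓝 L)

/-- The M-integral `_M I_a^{α,β} f(t) = Γ(β+1) ∫_a^t f(x)/x^{1-α} dx`. -/
noncomputable def MIntegral (α β a t : ℝ) (f : ℝ → ℝ) : ℝ :=
  Real.Gamma (β + 1) * ∫ x in a..t, f x / x ^ (1 - α)

open MeasureTheory Set

namespace Real

lemma exp_neg_one_le_Gamma {y : ℝ} (hy : 1 ≤ y) : exp (-1) ≤ Gamma y := by
  have hy0 : 0 < y := one_pos.trans_le hy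
  have hInt : IntegrableOn (fun x : ℝ => exp (-x) * x ^ (y - 1)) (Ioi 0) :=
    GammaIntegral_convergent hy0
  have hexp : IntegrableOn (fun x : ℝ => exp (-x)) (Ioi 1) := by
    simpa using exp_neg_integrableOn_Ioi (1 : ℝ) (b := 1) one_pos
  calc exp (-1) = ∫ x in Ioi (1 : ℝ), exp (-x) := (integral_exp_neg_Ioi 1).symm
    _ ≤ ∫ x in Ioi (1 : ℝ), exp (-x) * x ^ (y - 1) := by
      refine setIntegral_mono_on hexp (hInt.mono_set (Ioi_subset_Ioi zero_le_one))
        measurableSet_Ioi fun x (hx : 1 < x) => ?_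
      exact le_mul_of_one_le_right (exp_pos _).le (one_le_rpow hx.le (by linarith))
    _ ≤ ∫ x in Ioi (0 : ℝ), exp (-x) * x ^ (y - 1) := by
      refine setIntegral_mono_set hInt ?_ (Ioi_subset_Ioi zero_le_one).eventuallyLE
      filter_upwards [self_mem_ae_restrict measurableSet_Ioi] with x (hx : 0 < x)
      positivity
    _ = Gamma y := (Gamma_eq_integral hy0).symm

end Real

section MittagLeffler

variable {β : ℝ}

lemma norm_mittagLeffler_term_le (hβ : 0 ≤ β) (x : ℝ) (k : ℕ) :
    ‖x ^ k / Real.Gamma (β * k + 1)‖ ≤ Real.exp 1 * |x| ^ k := by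
  have hΓ : Real.exp (-1) ≤ Real.Gamma (β * k + 1) :=
    Real.exp_neg_one_le_Gamma (by nlinarith [Nat.cast_nonneg (α := ℝ) k])
  have hΓ0 : 0 < Real.Gamma (β * k + 1) := (Real.exp_pos _).trans_le hΓ
  rw [Real.norm_eq_abs, abs_div, abs_pow, abs_of_pos hΓ0, div_le_iff₀ hΓ0]
  calc |x| ^ k = Real.exp 1 * Real.exp (-1) * |x| ^ k := by
        rw [← Real.exp_add]; norm_num
    _ ≤ Real.exp 1 * Real.Gamma (β * k + 1) * |x| ^ k := by gcongr
    _ = _ := by ring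

@[simp]
lemma mittagLeffler_zero (β : ℝ) : mittagLeffler β 0 = 1 := by
  rw [mittagLeffler, tsum_eq_single 0 fun k hk => by simp [zero_pow hk]]
  simp

lemma abs_mittagLeffler_sub_linear_le (hβ : 0 ≤ β) {x : ℝ} (hx : |x| ≤ 1 / 2) :
    |mittagLeffler β x - 1 - x / Real.Gamma (β + 1)| ≤ 2 * Real.exp 1 * x ^ 2 := by
  have hx1 : |x| < 1 := hx.trans_lt (by norm_num)
  set g : ℕ → ℝ := fun k => x ^ k / Real.Gamma (β * k + 1) with hg
  have hgeo : Summable (fun k : ℕ => Real.exp 1 * |x| ^ (k + 2)) :=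
    ((summable_nat_add_iff 2).mpr (summable_geometric_of_lt_one (abs_nonneg x) hx1)).mul_left _
  have hbound (k : ℕ) : ‖g (k + 2)‖ ≤ Real.exp 1 * |x| ^ (k + 2) :=
    norm_mittagLeffler_term_le hβ x (k + 2)
  have htail : Summable (fun k => ‖g (k + 2)‖) :=
    .of_nonneg_of_le (fun _ => norm_nonneg _) hbound hgeo
  have hsplit : mittagLeffler β x - 1 - x / Real.Gamma (β + 1) = ∑' k, g (k + 2) := by
    rw [mittagLeffler, ← hg, ← ((summable_nat_add_iff 2).mp htail.of_norm).sum_add_tsum_nat_add 2]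
    simp only [hg, Finset.sum_range_succ, Finset.range_one, Finset.sum_singleton, pow_zero,
      CharP.cast_eq_zero, mul_zero, zero_add, Real.Gamma_one, div_one, pow_one, Nat.cast_one,
      mul_one, Nat.cast_add, Nat.cast_ofNat]
    ring
  have hinv : (1 - |x|)⁻¹ ≤ 2 := by
    rw [inv_le_comm₀ (by linarith) (by norm_num)]
    linarith
  rw [hsplit]
  calc |∑' k, g (k + 2)| ≤ ∑' k, ‖g (k + 2)‖ := norm_tsum_le_tsum_norm htail
    _ ≤ ∑' k, Real.exp 1 * |x| ^ (k + 2) := htail.tsum_le_tsum hbound hgeo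
    _ = Real.exp 1 * x ^ 2 * (1 - |x|)⁻¹ := by
      simp_rw [pow_add, mul_comm _ (|x| ^ 2), ← mul_assoc, tsum_mul_left,
        tsum_geometric_of_lt_one (abs_nonneg x) hx1, sq_abs]
    _ ≤ Real.exp 1 * x ^ 2 * 2 := by gcongr
    _ = 2 * Real.exp 1 * x ^ 2 := by ring

lemma hasDerivAt_mittagLeffler_zero (hβ : 0 ≤ β) :
    HasDerivAt (mittagLeffler β) (Real.Gamma (β + 1))⁻¹ 0 := by
  rw [hasDerivAt_iff_isLittleO]
  have hsmall : ∀ᶠ x : ℝ in 𝓝 0, |x| ≤ 1 / 2 := by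
    filter_upwards [Metric.closedBall_mem_nhds (0 : ℝ) (by norm_num : (0 : ℝ) < 1 / 2)] with x hx
    simpa using hx
  have hO : (fun x => mittagLeffler β x - mittagLeffler β 0 - (x - 0) • (Real.Gamma (β + 1))⁻¹)
      =O[𝓝 0] fun x : ℝ => x ^ 2 := by
    refine Asymptotics.IsBigO.of_bound (2 * Real.exp 1) ?_
    filter_upwards [hsmall] with x hx
    simpa [div_eq_mul_inv] using abs_mittagLeffler_sub_linear_le hβ hx
  exact hO.trans_isLittleO (by simpa using Asymptotics.isLittleO_pow_id (𝕜 := ℝ) one_lt_two)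

end MittagLeffler

lemma HasDerivAt.hasLocalMDerivAt {α β t F' : ℝ} {F : ℝ → ℝ} (hF : HasDerivAt F F' t)
    (ht : 0 < t) (hβ : 0 ≤ β) :
    HasLocalMDerivAt α β F t ((Real.Gamma (β + 1))⁻¹ * t ^ (1 - α) * F') := by
  set s : ℝ → ℝ := fun ε => t * mittagLeffler β (ε * t ^ (-α))
  have hs0 : s 0 = t := by simp [s]
  have hs : HasDerivAt s ((Real.Gamma (β + 1))⁻¹ * t ^ (1 - α)) 0 := by
    have hE : HasDerivAt (mittagLeffler β) (Real.Gamma (β + 1))⁻¹ (0 * t ^ (-α)) := by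
      simpa using hasDerivAt_mittagLeffler_zero hβ
    refine ((hE.comp 0 (hasDerivAt_mul_const (t ^ (-α)))).const_mul t).congr_deriv ?_
    rw [sub_eq_add_neg, Real.rpow_add ht, Real.rpow_one]
    ring
  have hFs : HasDerivAt (F ∘ s) (F' * ((Real.Gamma (β + 1))⁻¹ * t ^ (1 - α))) 0 :=
    (hs0 ▸ hF).comp 0 hs
  rw [mul_comm]
  refine (hasDerivAt_iff_tendsto_slope.mp hFs).congr fun ε => ?_
  simp only [slope_def_field, Function.comp_apply, hs0, sub_zero, s]

lemma hasDerivAt_MIntegral {α β a t : ℝ} {f : ℝ → ℝ} (ha : 0 ≤ a) (ht : a < t)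
    (hf : ContinuousOn f (Ioi a))
    (hint : IntervalIntegrable (fun x => f x / x ^ (1 - α)) volume a t) :
    HasDerivAt (fun s => MIntegral α β a s f) (Real.Gamma (β + 1) * (f t / t ^ (1 - α))) t := by
  have hcont : ContinuousOn (fun x => f x / x ^ (1 - α)) (Ioi a) :=
    hf.div (continuousOn_id.rpow_const fun x hx => Or.inl (ha.trans_lt hx).ne')
      fun x hx => (Real.rpow_pos_of_pos (ha.trans_lt hx) _).ne'
  exact (intervalIntegral.integral_hasDerivAt_right hint
    (hcont.stronglyMeasurableAtFilter isOpen_Ioi t ht)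
    (hcont.continuousAt (Ioi_mem_nhds ht))).const_mul _

theorem stmt15_general (a α β : ℝ) (ha : 0 < a) (hβ : 0 < β)
    (f : ℝ → ℝ) (hf : ContinuousOn f (Set.Ici a))
    (t : ℝ) (ht : a < t)
    (hint : IntervalIntegrable (fun x => f x / x ^ (1 - α)) MeasureTheory.volume a t) :
    HasLocalMDerivAt α β (fun s => MIntegral α β a s f) t (f t) := by
  have ht0 : 0 < t := ha.trans ht
  have hΓ : Real.Gamma (β + 1) ≠ 0 := (Real.Gamma_pos_of_pos (by linarith)).ne'
  have htα : t ^ (1 - α) ≠ 0 := (Real.rpow_pos_of_pos ht0 _).ne'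
  have hF := hasDerivAt_MIntegral (β := β) ha.le ht (hf.mono Ioi_subset_Ici_self) hint
  convert hF.hasLocalMDerivAt (α := α) ht0 hβ.le using 1
  field_simp

/-- Inverse property: `𝒟_M^{α,β} (_M I_a^{α,β} f)(t) = f(t)` for `t > a`. -/
theorem stmt15 (a α β : ℝ) (ha : 0 < a) (hα0 : 0 < α) (hα1 : α < 1) (hβ : 0 < β)
    (f : ℝ → ℝ) (hf : ContinuousOn f (Set.Ici a))
    (t : ℝ) (ht : a < t)
    (hint : IntervalIntegrable (fun x => f x / x ^ (1 - α)) MeasureTheory.volume a t) :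
    HasLocalMDerivAt α β (fun s => MIntegral α β a s f) t (f t) :=
  stmt15_general a α β ha hβ f hf t ht hint
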